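/- There exists a function g : ℕ × ℕ → ℕ such that for all positive integers t and q, if M is a finite matroid with the (t,2t)-property and |E(M)| ≥ g(t,q), then for some M' ∈ {M, M*} the matroid M' has t − 1 pairwise disjoint cocircuits C*₁, …, C*_{t−1}, and there is a set Z ⊆ E(M') − ⋃_{i=1}^{t−1} C*_i such that (1) the rank of Z in M' is at least q, and (2) for each z ∈ Z there exists z' ∈ Z − {z} such that each C*_i contains a 2-element subset {x_i, x_i'} for which {z, z'} ∪ ⋃_{i=1}^{t−1}{x_i, x_i'} is a circuit of M'. -/

import Mathlib

/-!
Replace `M` by `M✶` if necessary so that `M` has a base with at least `|E|/2` elements.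
Greedily adding cocircuits from the `(t,2t)`-property, each through an element not yet covered,
gives a set `W` with `|W| ≤ (s+1)·2t` that is spanned in `M✶` by all but `s+1` of its elements;
so `W - S` is dependent in `M✶` for every `s`-element set `S`, and contains a small cocircuit of `M`
avoiding `S`. Repeating this gives `t-1` disjoint cocircuits with small union `U`, and
`Z := E - cl(U)` has rank at least `r(M) - |U| ≥ q`.
For `z ∈ Z`, take a `2t`-element circuit `D` through `z` and one element of each `C*ᵢ`. It meets
each `C*ᵢ` in at least two elements, and has a second element `z' ∉ cl(U)` since otherwise
`z ∈ cl(D - z) ⊆ cl(U)`; counting forces `D = {z, z'} ∪ ⋃ (D ∩ C*ᵢ)` with `|D ∩ C*ᵢ| = 2`.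
-/

open Set

/-- A circuit of a matroid: a minimal dependent set. -/
def IsCircuit {α : Type*} (M : Matroid α) (C : Set α) : Prop :=
  M.Dep C ∧ ∀ D, D ⊂ C → ¬ M.Dep D

/-- A cocircuit of a matroid: a circuit of the dual. -/
def IsCocircuit {α : Type*} (M : Matroid α) (C : Set α) : Prop :=
  IsCircuit M✶ C

/-- `M` has the `(t,ℓ)`-property: every `t`-element subset of the ground set is contained
in an `ℓ`-element circuit and an `ℓ`-element cocircuit. -/
def HasTLProperty {α : Type*} (M : Matroid α) (t ℓ : ℕ) : Prop :=
  ∀ X ⊆ M.E, X.ncard = t →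
    (∃ C, IsCircuit M C ∧ C.ncard = ℓ ∧ X ⊆ C) ∧
    (∃ C, IsCocircuit M C ∧ C.ncard = ℓ ∧ X ⊆ C)

/-- The rank of a set in a matroid: the maximum cardinality of an independent subset. -/
noncomputable def rk {α : Type*} (M : Matroid α) (X : Set α) : ℕ :=
  sSup {n | ∃ I, I ⊆ X ∧ M.Indep I ∧ I.ncard = n}

open scoped Function

lemma Fin.pairwise_disjoint_cons {α : Type*} {n : ℕ} {K : Set α} {C : Fin n → Set α}
    (hK : ∀ i, Disjoint K (C i)) (hC : Pairwise (Disjoint on C)) :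
    Pairwise (Disjoint on (Fin.cons K C : Fin (n + 1) → Set α)) := by
  intro i j hij
  cases i using Fin.cases <;> cases j using Fin.cases
  · exact absurd rfl hij
  · exact hK _
  · exact (hK _).symm
  · exact hC (fun h => hij (congrArg Fin.succ h))

lemma exists_ncard_insert_range_eq {α : Type*} {n : ℕ} {C : Fin n → Set α}
    (hne : ∀ i, (C i).Nonempty) (hC : Pairwise (Disjoint on C)) {z : α} (hz : z ∉ ⋃ i, C i) :
    ∃ x : Fin n → α, (∀ i, x i ∈ C i) ∧ (insert z (range x)).ncard = n + 1 := by
  choose x hx using hne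
  have hinj : x.Injective := fun i j hij => by
    by_contra h
    exact (hC h).ne_of_mem (hx i) (hx j) hij
  refine ⟨x, hx, ?_⟩
  rw [ncard_insert_of_notMem _ (finite_range x), ncard_range_of_injective hinj,
    Nat.card_eq_fintype_card, Fintype.card_fin]
  rintro ⟨i, rfl⟩
  exact hz (mem_iUnion_of_mem i (hx i))

lemma ncard_inter_eq_two_and_eq_pair_union {α : Type*} {n : ℕ} {D : Set α} {C : Fin n → Set α}
    (hD : D.Finite) (hC : Pairwise (Disjoint on C)) {z z' : α} (hz : z ∈ D \ ⋃ i, C i)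
    (hz' : z' ∈ D \ ⋃ i, C i) (hzz' : z ≠ z') (h2 : ∀ i, 2 ≤ (D ∩ C i).ncard)
    (hDcard : D.ncard ≤ 2 * n + 2) :
    (∀ i, (D ∩ C i).ncard = 2) ∧ D = {z, z'} ∪ ⋃ i, D ∩ C i := by
  set R := ⋃ i, D ∩ C i
  have hR : R.ncard = ∑ i, (D ∩ C i).ncard := by
    rw [ncard_iUnion_of_finite (fun i => hD.inter_of_left _)
      (fun i j hij => (hC hij).mono inter_subset_right inter_subset_right),
      finsum_eq_sum_of_fintype]
  have htwo : ∑ _i : Fin n, 2 = 2 * n := by simp [mul_comm]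
  have hsum : ∑ _i : Fin n, 2 ≤ ∑ i, (D ∩ C i).ncard := Finset.sum_le_sum fun i _ => h2 i
  have hdisj : Disjoint {z, z'} R := by
    rw [disjoint_insert_left, disjoint_singleton_left]
    exact ⟨fun h => hz.2 (iUnion_mono (fun i => inter_subset_right) h),
      fun h => hz'.2 (iUnion_mono (fun i => inter_subset_right) h)⟩
  have hsub : {z, z'} ∪ R ⊆ D :=
    union_subset (insert_subset hz.1 (singleton_subset_iff.2 hz'.1))
      (iUnion_subset fun i => inter_subset_left)
  have hcard : ({z, z'} ∪ R).ncard = 2 + R.ncard := by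
    rw [ncard_union_eq hdisj (toFinite _) (hD.subset (subset_union_right.trans hsub)),
      ncard_pair hzz']
  have hle := ncard_le_ncard hsub hD
  have heq : ∑ i, (D ∩ C i).ncard = ∑ _i : Fin n, 2 := by omega
  refine ⟨fun i => ?_, (eq_of_subset_of_ncard_le hsub (by omega) hD).symm⟩
  exact (Finset.sum_eq_sum_iff_of_le fun i _ => h2 i).1 heq.symm i (Finset.mem_univ i) |>.symm

namespace Matroid

variable {α : Type*} {M : Matroid α} {t ℓ : ℕ} {I X : Set α}

lemma Indep.ncard_le_of_subset_closure (hI : M.Indep I) (hX : X.Finite)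
    (hIX : I ⊆ M.closure X) : I.ncard ≤ X.ncard := by
  have h : I.encard ≤ X.encard := calc
    I.encard ≤ M.eRk (M.closure X) := hI.encard_le_eRk_of_subset hIX
    _ = M.eRk X := M.eRk_closure_eq X
    _ ≤ X.encard := M.eRk_le_encard X
  rw [← hX.cast_ncard_eq] at h
  exact (encard_le_coe_iff_finite_ncard_le.1 h).2

lemma IsCircuit.exists_ne_notMem_closure {C : Set α} {z : α} (hC : M.IsCircuit C) (hz : z ∈ C)
    (hzX : z ∉ M.closure X) : ∃ z' ∈ C, z' ≠ z ∧ z' ∉ M.closure X := by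
  by_contra! h
  exact hzX <| M.closure_subset_closure_of_subset_closure (fun x hx => h x hx.1 hx.2)
    (hC.mem_closure_sdiff_singleton_of_mem hz)

lemma exists_subset_closure_sdiff (hE : M.E.Finite) (ht : 0 < t)
    (hcov : ∀ X ⊆ M.E, X.ncard = t → ∃ C, M.IsCircuit C ∧ C.ncard ≤ ℓ ∧ X ⊆ C) (n : ℕ)
    (hn : n * ℓ + t ≤ M.E.ncard) :
    ∃ W D, D ⊆ W ∧ W ⊆ M.E ∧ W.ncard ≤ n * ℓ ∧ D.ncard = n ∧ W ⊆ M.closure (W \ D) := by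
  induction n with
  | zero => exact ⟨∅, ∅, by simp⟩
  | succ n ih =>
    rw [Nat.succ_mul] at hn
    obtain ⟨W, D, hDW, hWE, hWcard, hDcard, hWcl⟩ := ih (by omega)
    have hfree : t ≤ (M.E \ W).ncard := by
      rw [ncard_sdiff hWE (hE.subset hWE)]
      omega
    obtain ⟨X, hXW, hXt⟩ := exists_subset_card_eq hfree
    obtain ⟨K, hK, hKℓ, hXK⟩ := hcov X (hXW.trans sdiff_subset) hXt
    obtain ⟨e, heX⟩ := nonempty_of_ncard_ne_zero (s := X) (by omega)
    have heW : e ∉ W := (hXW heX).2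
    set Y := (W ∪ K) \ insert e D
    have hYE : Y ⊆ M.E := sdiff_subset.trans (union_subset hWE hK.subset_ground)
    have hWY : W ⊆ M.closure Y := hWcl.trans <| M.closure_subset_closure fun x hx =>
      ⟨Or.inl hx.1, by rintro (rfl | hxD); exacts [heW hx.1, hx.2 hxD]⟩
    have hKY : K \ {e} ⊆ M.closure Y := fun x hx => by
      by_cases hxD : x ∈ D
      · exact hWY (hDW hxD)
      · exact M.subset_closure Y hYE ⟨Or.inr hx.1, by rintro (rfl | h); exacts [hx.2 rfl, hxD h]⟩
    refine ⟨W ∪ K, insert e D, insert_subset (Or.inr (hXK heX)) (hDW.trans subset_union_left),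
      union_subset hWE hK.subset_ground, ?_, ?_, ?_⟩
    · calc (W ∪ K).ncard ≤ W.ncard + K.ncard := ncard_union_le W K
        _ ≤ (n + 1) * ℓ := by rw [Nat.succ_mul]; omega
    · rw [ncard_insert_of_notMem (fun h => heW (hDW h)) ((hE.subset hWE).subset hDW), hDcard]
    · exact union_subset hWY <| (hK.subset_closure_sdiff_singleton e).trans
        (M.closure_subset_closure_of_subset_closure hKY)

lemma exists_isCircuit_disjoint (hE : M.E.Finite) (ht : 0 < t)
    (hcov : ∀ X ⊆ M.E, X.ncard = t → ∃ C, M.IsCircuit C ∧ C.ncard ≤ ℓ ∧ X ⊆ C) {S : Set α}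
    (hS : S.Finite) (hbig : (S.ncard + 1) * ℓ + t ≤ M.E.ncard) :
    ∃ C, M.IsCircuit C ∧ Disjoint C S ∧ C.ncard ≤ (S.ncard + 1) * ℓ := by
  obtain ⟨W, D, hDW, hWE, hWcard, hDcard, hWcl⟩ :=
    exists_subset_closure_sdiff hE ht hcov (S.ncard + 1) hbig
  have hWfin : W.Finite := hE.subset hWE
  -- `W \ S` is spanned by `W \ D`, which is smaller because `|D| > |S|`.
  have hdep : M.Dep (W \ S) := by
    rw [← not_indep_iff (sdiff_subset.trans hWE)]
    intro hI
    have h₁ := hI.ncard_le_of_subset_closure hWfin.sdiff (sdiff_subset.trans hWcl)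
    have h₂ := le_ncard_sdiff S W hS
    have h₃ := ncard_sdiff hDW (hWfin.subset hDW)
    have h₄ := ncard_le_ncard hDW hWfin
    omega
  obtain ⟨C, hCW, hC⟩ := hdep.exists_isCircuit_subset
  exact ⟨C, hC, disjoint_sdiff_left.mono_left hCW,
    (ncard_le_ncard (hCW.trans sdiff_subset) hWfin).trans hWcard⟩

lemma exists_pairwise_disjoint_isCircuit (hE : M.E.Finite) (ht : 0 < t)
    (hcov : ∀ X ⊆ M.E, X.ncard = t → ∃ C, M.IsCircuit C ∧ C.ncard ≤ ℓ ∧ X ⊆ C) (n : ℕ)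
    (hn : (ℓ + 1) ^ n + t ≤ M.E.ncard) :
    ∃ C : Fin n → Set α, (∀ i, M.IsCircuit (C i)) ∧ Pairwise (Disjoint on C) ∧
      (⋃ i, C i).ncard < (ℓ + 1) ^ n := by
  induction n with
  | zero => exact ⟨Fin.elim0, fun i => i.elim0, fun i => i.elim0, by simp⟩
  | succ n ih =>
    have hpow : (ℓ + 1) ^ (n + 1) = (ℓ + 1) ^ n * ℓ + (ℓ + 1) ^ n := by ring
    obtain ⟨C, hC, hdisj, hU⟩ := ih (by omega)
    have hUℓ : ((⋃ i, C i).ncard + 1) * ℓ ≤ (ℓ + 1) ^ n * ℓ := Nat.mul_le_mul_right ℓ hU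
    have hUfin : (⋃ i, C i).Finite := hE.subset (iUnion_subset fun i => (hC i).subset_ground)
    obtain ⟨K, hK, hKU, hKcard⟩ := exists_isCircuit_disjoint hE ht hcov hUfin (by omega)
    refine ⟨Fin.cons K C, Fin.cases hK hC,
      Fin.pairwise_disjoint_cons (fun i => hKU.mono_right (subset_iUnion C i)) hdisj, ?_⟩
    rw [iUnion_cons]
    calc (K ∪ ⋃ i, C i).ncard ≤ K.ncard + (⋃ i, C i).ncard := ncard_union_le _ _
      _ < (ℓ + 1) ^ (n + 1) := by omega

lemma exists_isCircuit_pair_union {n : ℕ} (hE : M.E.Finite) {C : Fin n → Set α}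
    (hC : ∀ i, M.IsCocircuit (C i)) (hdisj : Pairwise (Disjoint on C))
    (hcov : ∀ X ⊆ M.E, X.ncard = n + 1 → ∃ D, M.IsCircuit D ∧ D.ncard ≤ 2 * n + 2 ∧ X ⊆ D)
    {z : α} (hz : z ∈ M.E \ M.closure (⋃ i, C i)) :
    ∃ z' ∈ M.E \ M.closure (⋃ i, C i), z' ≠ z ∧ ∃ x x' : Fin n → α,
      (∀ i, x i ∈ C i ∧ x' i ∈ C i ∧ x i ≠ x' i) ∧
      M.IsCircuit ({z, z'} ∪ ⋃ i, {x i, x' i}) := by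
  set U := ⋃ i, C i
  have hUE : U ⊆ M.E := iUnion_subset fun i => (hC i).subset_ground
  have hzU : z ∉ U := fun h => hz.2 (M.subset_closure U hUE h)
  obtain ⟨y, hy, hX⟩ := exists_ncard_insert_range_eq (fun i => (hC i).nonempty) hdisj hzU
  obtain ⟨D, hD, hDcard, hXD⟩ := hcov _
    (insert_subset hz.1 (range_subset_iff.2 fun i => (hC i).subset_ground (hy i))) hX
  have hzD : z ∈ D := hXD (mem_insert _ _)
  obtain ⟨z', hz'D, hz'z, hz'U⟩ := hD.exists_ne_notMem_closure hzD hz.2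
  have h2 : ∀ i, 2 ≤ (D ∩ C i).ncard := fun i =>
    one_lt_ncard_iff_nontrivial_and_finite.2 ⟨hD.isCocircuit_inter_nontrivial (hC i)
      ⟨y i, hXD (mem_insert_of_mem _ ⟨i, rfl⟩), hy i⟩,
      (hE.subset hD.subset_ground).inter_of_left _⟩
  obtain ⟨hpair, hDeq⟩ := ncard_inter_eq_two_and_eq_pair_union (hE.subset hD.subset_ground) hdisj
    ⟨hzD, hzU⟩ ⟨hz'D, fun h => hz'U (M.subset_closure U hUE h)⟩ hz'z.symm h2 hDcard
  choose x x' hxx' hDC using fun i => ncard_eq_two.1 (hpair i)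
  refine ⟨z', ⟨hD.subset_ground hz'D, hz'U⟩, hz'z, x, x', fun i => ?_, ?_⟩
  · have hx : x i ∈ D ∩ C i := by rw [hDC i]; exact mem_insert _ _
    have hx' : x' i ∈ D ∩ C i := by rw [hDC i]; exact mem_insert_of_mem _ rfl
    exact ⟨hx.2, hx'.2, hxx' i⟩
  · simp_rw [← hDC, ← hDeq]
    exact hD

lemma exists_isBase_two_mul_ncard_ge (hE : M.E.Finite) :
    ∃ M', (M' = M ∨ M' = M✶) ∧ ∃ B, M'.IsBase B ∧ M.E.ncard ≤ 2 * B.ncard := by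
  obtain ⟨B, hB⟩ := M.exists_isBase
  have h := ncard_sdiff_add_ncard_of_subset hB.subset_ground hE
  by_cases hle : M.E.ncard ≤ 2 * B.ncard
  · exact ⟨M, .inl rfl, B, hB, hle⟩
  · exact ⟨M✶, .inr rfl, M.E \ B, hB.compl_isBase_dual, by omega⟩

end Matroid

lemma isCircuit_iff_matroid_isCircuit {α : Type*} {M : Matroid α} {C : Set α} :
    IsCircuit M C ↔ M.IsCircuit C := by
  rw [Matroid.isCircuit_iff_forall_ssubset, IsCircuit]
  refine and_congr_right fun hC => forall₂_congr fun D hDC => ?_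
  rw [Matroid.not_dep_iff (hDC.subset.trans hC.subset_ground)]

lemma isCocircuit_iff_matroid_isCocircuit {α : Type*} {M : Matroid α} {K : Set α} :
    IsCocircuit M K ↔ M.IsCocircuit K :=
  isCircuit_iff_matroid_isCircuit

section Rank

variable {α : Type*} {M : Matroid α} {B I U Z : Set α}

lemma le_rk_of_indep (hE : M.E.Finite) (hIZ : I ⊆ Z) (hI : M.Indep I) : I.ncard ≤ rk M Z :=
  le_csSup ⟨M.E.ncard, fun _ ⟨_, _, hJ, hJn⟩ => hJn ▸ ncard_le_ncard hJ.subset_ground hE⟩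
    ⟨I, hIZ, hI, rfl⟩

lemma Matroid.IsBase.ncard_le_rk_sdiff_closure_add (hE : M.E.Finite) (hB : M.IsBase B)
    (hU : U.Finite) : B.ncard ≤ rk M (M.E \ M.closure U) + U.ncard := by
  have h₁ : (B ∩ M.closure U).ncard ≤ U.ncard :=
    (hB.indep.subset inter_subset_left).ncard_le_of_subset_closure hU inter_subset_right
  have h₂ : (B \ M.closure U).ncard ≤ rk M (M.E \ M.closure U) :=
    le_rk_of_indep hE (sdiff_subset_sdiff_left hB.subset_ground) (hB.indep.subset sdiff_subset)
  have h₃ := ncard_inter_add_ncard_sdiff_eq_ncard B (M.closure U) (hE.subset hB.subset_ground)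
  omega

end Rank

namespace HasTLProperty

variable {α : Type*} {M : Matroid α} {t ℓ : ℕ}

lemma dual (h : HasTLProperty M t ℓ) : HasTLProperty M✶ t ℓ := by
  intro X hX hXt
  obtain ⟨⟨C, hC, hCℓ, hXC⟩, ⟨K, hK, hKℓ, hXK⟩⟩ := h X hX hXt
  refine ⟨⟨K, hK, hKℓ, hXK⟩, ⟨C, ?_, hCℓ, hXC⟩⟩
  rwa [IsCocircuit, Matroid.dual_dual]

lemma exists_isCircuit (h : HasTLProperty M t ℓ) {X : Set α} (hX : X ⊆ M.E)
    (hXt : X.ncard = t) : ∃ C, M.IsCircuit C ∧ C.ncard ≤ ℓ ∧ X ⊆ C := by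
  obtain ⟨C, hC, hCℓ, hXC⟩ := (h X hX hXt).1
  exact ⟨C, isCircuit_iff_matroid_isCircuit.1 hC, hCℓ.le, hXC⟩

end HasTLProperty

universe u

theorem statement12 :
    ∃ g : ℕ × ℕ → ℕ, ∀ t q : ℕ, 0 < t → 0 < q →
      ∀ {α : Type u} (M : Matroid α), M.E.Finite → HasTLProperty M t (2 * t) →
        g (t, q) ≤ M.E.ncard →
        ∃ M' : Matroid α, (M' = M ∨ M' = M✶) ∧
          ∃ C : Fin (t - 1) → Set α, (∀ i, IsCocircuit M' (C i)) ∧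
            (∀ i j, i ≠ j → Disjoint (C i) (C j)) ∧
            ∃ Z ⊆ M'.E \ ⋃ i, C i, q ≤ rk M' Z ∧
              ∀ z ∈ Z, ∃ z' ∈ Z \ {z}, ∃ x x' : Fin (t - 1) → α,
                (∀ i, x i ∈ C i ∧ x' i ∈ C i ∧ x i ≠ x' i) ∧
                IsCircuit M' ({z, z'} ∪ ⋃ i, {x i, x' i}) := by
  -- `(2t+1)^(t-1)` bounds the union of the `t-1` cocircuits, and the chosen base has at least
  -- half of the elements.
  refine ⟨fun p => 2 * (p.2 + (2 * p.1 + 1) ^ (p.1 - 1)) + p.1, ?_⟩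
  intro t q ht _ α M hE hM hbig
  dsimp only at hbig
  obtain ⟨M', hM', B, hB, hBcard⟩ := M.exists_isBase_two_mul_ncard_ge hE
  have hM'E : M'.E = M.E := by rcases hM' with rfl | rfl <;> rfl
  have hP : HasTLProperty M' t (2 * t) := by rcases hM' with rfl | rfl; exacts [hM, hM.dual]
  have hE' : M'.E.Finite := hM'E ▸ hE
  obtain ⟨C, hC, hdisj, hU⟩ := M'✶.exists_pairwise_disjoint_isCircuit hE' ht
    (fun X hX => hP.dual.exists_isCircuit hX) (t - 1) (by rw [Matroid.dual_ground, hM'E]; omega)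
  have hC' : ∀ i, M'.IsCocircuit (C i) := hC
  have hUE : ⋃ i, C i ⊆ M'.E := iUnion_subset fun i => (hC' i).subset_ground
  refine ⟨M', hM', C, fun i => isCocircuit_iff_matroid_isCocircuit.2 (hC' i), hdisj,
    M'.E \ M'.closure (⋃ i, C i), sdiff_subset_sdiff_right (M'.subset_closure _ hUE), ?_, ?_⟩
  · have := hB.ncard_le_rk_sdiff_closure_add hE' (hE'.subset hUE)
    omega
  · intro z hz
    obtain ⟨z', hz', hz'z, x, x', hx, hcirc⟩ := Matroid.exists_isCircuit_pair_union hE' hC' hdisj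
      (fun X hX hXt => by
        obtain ⟨D, hD, hDcard, hXD⟩ := hP.exists_isCircuit hX (by omega)
        exact ⟨D, hD, by omega, hXD⟩) hz
    exact ⟨z', ⟨hz', hz'z⟩, x, x', hx, isCircuit_iff_matroid_isCircuit.2 hcirc⟩
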